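/- arXiv:2003.00524 — 3 statements merged into one kernel-verified Lean document; each statement's English description precedes it below -/
import Mathlib

section
/- Let \(A_n\) (n ≥ 2) be an n×n upper Hessenberg–Toeplitz matrix with subdiagonal entries \(a_{-1} \neq 0\), and let \(x = (x_{n-1}, x_{n-2}, \ldots, x_0)^\top\) be an eigenvector of \(A_n\) with eigenvalue \(\lambda\). Then for all \(1 \leq i \leq n-1\), \(x_i = (-1/a_{-1})^i d_i(\lambda) x_0\), where \(d_i(\lambda)\) is the characteristic polynomial of the i×i leading Hessenberg–Toeplitz matrix \(A_i\) built from the same sequence. -/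
/-- The n×n upper Hessenberg–Toeplitz matrix with entry (i,j) equal to
`a (j - i)` for `j ≥ i - 1` and 0 otherwise. -/
def htMatrix {R : Type*} [CommRing R] (a : ℤ → R) (n : ℕ) :
    Matrix (Fin n) (Fin n) R :=
  Matrix.of fun i j => if (i : ℤ) ≤ (j : ℤ) + 1 then a ((j : ℤ) - (i : ℤ)) else 0

/-- The characteristic polynomial of `htMatrix a n` evaluated at `lam`. -/
def htCharPolyEval {R : Type*} [CommRing R] (a : ℤ → R) (n : ℕ) (lam : R) : R :=
  (htMatrix a n - lam • (1 : Matrix (Fin n) (Fin n) R)).det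

/-!
Since `A_n - λ I` is the Hessenberg–Toeplitz matrix of the sequence `a'` obtained by replacing
`a 0` with `a 0 - λ`, row `n - 1 - k` of `(A_n - λ I) x = 0` reads
`a_{-1} x_{k+1} + ∑_{m ≤ k} a'_{k-m} x_m = 0`. Expanding `d_{k+1}` along its last column gives
`d_{k+1} = ∑_{m ≤ k} (-a_{-1})^{k-m} a'_{k-m} d_m`, so `(-1/a_{-1})^k d_k(λ)` solves the same
recurrence, with value `1` at `k = 0`. As `a_{-1} ≠ 0`, a solution of the recurrence is determined
by its value at `0`.
-/

open Finset Matrix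

section CommRing

variable {R : Type*} [CommRing R] (a : ℤ → R)

lemma htMatrix_apply_of_le {n : ℕ} {i j : Fin n} (h : (i : ℤ) ≤ j + 1) :
    htMatrix a n i j = a (j - i) :=
  if_pos h

lemma htMatrix_apply_of_lt {n : ℕ} {i j : Fin n} (h : (j : ℤ) + 1 < i) :
    htMatrix a n i j = 0 :=
  if_neg (not_le.mpr h)

lemma htMatrix_sub_smul_one (n : ℕ) (lam : R) :
    htMatrix a n - lam • (1 : Matrix (Fin n) (Fin n) R) =
      htMatrix (Function.update a 0 (a 0 - lam)) n := by
  ext i j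
  by_cases hij : i = j
  · subst hij
    simp [htMatrix]
  · have : (j : ℤ) - i ≠ 0 := sub_ne_zero.mpr (by simpa [Fin.ext_iff, eq_comm] using hij)
    simp [htMatrix, one_apply_ne hij, this]

/-- Deleting row `i` and the last column leaves a block upper triangular matrix whose diagonal
blocks are `A_i` and an upper triangular matrix with diagonal `a (-1)`. -/
lemma det_htMatrix_submatrix_succAbove_last {k : ℕ} (i : Fin (k + 1)) :
    ((htMatrix a (k + 1)).submatrix i.succAbove Fin.castSucc).det =
      (htMatrix a i).det * a (-1) ^ (k - i) := by
  have hi := i.is_lt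
  let e : Fin i ⊕ Fin (k - i) ≃ Fin k := finSumFinEquiv.trans (finCongr (by omega))
  have hrow : ∀ r : Fin k, ((i.succAbove r : Fin (k + 1)) : ℕ) =
      if (r : ℕ) < i then (r : ℕ) else r + 1 := by
    intro r
    simp only [Fin.succAbove, Fin.lt_def, Fin.val_castSucc]
    split_ifs <;> simp
  rw [← det_submatrix_equiv_self e]
  have hblocks : ((htMatrix a (k + 1)).submatrix i.succAbove Fin.castSucc).submatrix e e =
      fromBlocks (htMatrix a i) (of fun r c => htMatrix a (k + 1) (i.succAbove (e (.inl r)))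
          (e (.inr c)).castSucc) 0
        (of fun r c : Fin (k - i) => htMatrix a (k + 1) (i.succAbove (e (.inr r)))
          (e (.inr c)).castSucc) := by
    ext (r | r) (c | c)
    · have hr : (r : ℕ) < i := r.is_lt
      simp [htMatrix, e, hrow, hr]
    · rfl
    · have hc : (c : ℕ) < i := c.is_lt
      simp [htMatrix, e, hrow]
      omega
    · rfl
  have hupper : IsUpperTriangular (of fun r c : Fin (k - i) =>
      htMatrix a (k + 1) (i.succAbove (e (.inr r))) (e (.inr c)).castSucc) := by
    intro r c hcr
    simp only [Fin.lt_def, id] at hcr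
    simp [htMatrix, e, hrow]
    omega
  rw [hblocks, det_fromBlocks_zero₂₁, det_of_isUpperTriangular hupper]
  congr 1
  have hdiag : ∀ r : Fin (k - i),
      htMatrix a (k + 1) (i.succAbove (e (.inr r))) (e (.inr r)).castSucc = a (-1) := by
    intro r
    rw [htMatrix_apply_of_le] <;> simp [e, hrow]
  simp [hdiag]

lemma det_htMatrix_succ (k : ℕ) :
    (htMatrix a (k + 1)).det =
      ∑ m ∈ range (k + 1), (-a (-1)) ^ (k - m) * a (k - m) * (htMatrix a m).det := by
  rw [det_succ_column _ (Fin.last k), ← Fin.sum_univ_eq_sum_range]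
  refine Fintype.sum_congr _ _ fun i => ?_
  have hi := i.is_le
  rw [Fin.succAbove_last, det_htMatrix_submatrix_succAbove_last,
    htMatrix_apply_of_le a (by simp; omega), Fin.val_last,
    show (i : ℕ) + k = (k - i) + 2 * i by omega, pow_add, pow_mul, neg_one_sq, one_pow, neg_pow]
  ring

def SolvesHTRecurrence (N : ℕ) (x : ℕ → R) : Prop :=
  ∀ k < N, ∑ m ∈ range (k + 2), a (k - m) * x m = 0

variable {a}

lemma solvesHTRecurrence_of_mulVec_eq_zero {n : ℕ} {x : ℕ → R}
    (hx : htMatrix a n *ᵥ (fun i : Fin n => x (n - 1 - i)) = 0) :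
    SolvesHTRecurrence a (n - 1) x := by
  intro k hk
  have hrow := congrFun hx ⟨n - 1 - k, by omega⟩
  have hentry : ∀ m : Fin n, htMatrix a n ⟨n - 1 - k, by omega⟩ m.rev * x (n - 1 - m.rev) =
      if (m : ℕ) < k + 2 then a (k - m) * x m else 0 := by
    intro m
    have hm := m.is_lt
    rw [Fin.val_rev, show n - 1 - (n - (m + 1)) = m by omega]
    split_ifs with hmk
    · rw [htMatrix_apply_of_le a (by simp; omega)]
      congr 2
      simp only [Fin.val_rev]
      omega
    · rw [htMatrix_apply_of_lt a (by simp; omega), zero_mul]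
  rw [mulVec, dotProduct, ← Equiv.sum_comp Fin.revPerm] at hrow
  simp only [Fin.revPerm_apply, hentry] at hrow
  rw [Fin.sum_univ_eq_sum_range (fun m => if m < k + 2 then a (k - m) * x m else 0),
    ← sum_filter] at hrow
  rwa [show (range n).filter (· < k + 2) = range (k + 2) by ext; simp; omega] at hrow

theorem SolvesHTRecurrence.apply_eq_mul_apply_zero {N : ℕ} {x y : ℕ → R}
    (ha : IsLeftRegular (a (-1)))
    (hx : SolvesHTRecurrence a N x) (hy : SolvesHTRecurrence a N y) (hy0 : y 0 = 1) :
    ∀ k ≤ N, x k = y k * x 0 := by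
  intro k
  induction k using Nat.strong_induction_on with
  | _ k ih =>
    intro hk
    cases k with
    | zero => rw [hy0, one_mul]
    | succ k =>
      have hxk := hx k (by omega)
      have hyk := hy k (by omega)
      have hlow : ∑ m ∈ range (k + 1), a (k - m) * x m =
          (∑ m ∈ range (k + 1), a (k - m) * y m) * x 0 := by
        rw [sum_mul]
        refine sum_congr rfl fun m hm => ?_
        rw [ih m (by simp at hm; omega) (by simp at hm; omega), mul_assoc]
      have hsub : ((k : ℕ) : ℤ) - ((k + 1 : ℕ) : ℤ) = -1 := by push_cast; ring
      rw [sum_range_succ, hsub] at hxk hyk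
      apply ha
      linear_combination hxk - x 0 * hyk - hlow

end CommRing

lemma solvesHTRecurrence_pow_mul_det {R : Type*} [Field R] {a : ℤ → R} (ha : a (-1) ≠ 0)
    (N : ℕ) : SolvesHTRecurrence a N (fun m => (-1 / a (-1)) ^ m * (htMatrix a m).det) := by
  intro k _
  set c := -1 / a (-1)
  have hca : c * a (-1) = -1 := div_mul_cancel₀ (-1) ha
  have hterm : ∀ m ∈ range (k + 1),
      a (-1) * (c ^ (k + 1) * ((-a (-1)) ^ (k - m) * a (k - m) * (htMatrix a m).det)) =
        -(a (k - m) * (c ^ m * (htMatrix a m).det)) := by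
    intro m hm
    have hpow : c ^ (k + 1) * (-a (-1)) ^ (k - m) = c ^ m * c := by
      rw [show k + 1 = m + 1 + (k - m) by simp at hm; omega, pow_add, mul_assoc, ← mul_pow,
        mul_neg, hca, neg_neg, one_pow, mul_one, pow_succ]
    linear_combination (a (-1) * a (k - m) * (htMatrix a m).det) * hpow +
      (c ^ m * a (k - m) * (htMatrix a m).det) * hca
  have hsub : ((k : ℕ) : ℤ) - ((k + 1 : ℕ) : ℤ) = -1 := by push_cast; ring
  dsimp only
  rw [sum_range_succ, hsub, det_htMatrix_succ, mul_sum, mul_sum, sum_congr rfl hterm,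
    sum_neg_distrib, add_neg_cancel]

theorem stmt2_general {R : Type*} [Field R] (a : ℤ → R) (ha : a (-1) ≠ 0)
    (n : ℕ) (lam : R) (x : ℕ → R)
    (hx : (htMatrix a n).mulVec (fun i : Fin n => x (n - 1 - (i : ℕ))) =
      lam • (fun i : Fin n => x (n - 1 - (i : ℕ)))) :
    ∀ i : ℕ, 1 ≤ i → i ≤ n - 1 →
      x i = (-1 / a (-1)) ^ i * htCharPolyEval a i lam * x 0 := by
  intro i _ hi
  set b := Function.update a 0 (a 0 - lam)
  have hb : b (-1) = a (-1) := Function.update_of_ne (by norm_num) _ _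
  have hb0 : b (-1) ≠ 0 := hb ▸ ha
  have hdet : ∀ m, htCharPolyEval a m lam = (htMatrix b m).det :=
    fun m => congrArg det (htMatrix_sub_smul_one a m lam)
  have hkernel : htMatrix b n *ᵥ (fun i : Fin n => x (n - 1 - i)) = 0 := by
    rw [← htMatrix_sub_smul_one, sub_mulVec, hx, smul_mulVec, one_mulVec, sub_self]
  have hsol := (solvesHTRecurrence_of_mulVec_eq_zero hkernel).apply_eq_mul_apply_zero
    (IsRegular.of_ne_zero hb0).left (solvesHTRecurrence_pow_mul_det hb0 (n - 1)) (by simp)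
  rw [hsol i hi, hdet, hb]

/-- If `x = (x_{n-1}, …, x_0)ᵀ` is an eigenvector of the Hessenberg–Toeplitz
matrix `A_n` (n ≥ 2, subdiagonal `a_{-1} ≠ 0`) with eigenvalue `λ`, then
`x_i = (-1/a_{-1})^i d_i(λ) x_0` for all `1 ≤ i ≤ n-1`, where `d_i` is the
characteristic polynomial of the i×i matrix built from the same sequence. -/
theorem stmt2 {R : Type*} [Field R] (a : ℤ → R) (ha : a (-1) ≠ 0)
    (n : ℕ) (hn : 2 ≤ n) (lam : R) (x : ℕ → R)
    (hx : (htMatrix a n).mulVec (fun i : Fin n => x (n - 1 - (i : ℕ))) =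
      lam • (fun i : Fin n => x (n - 1 - (i : ℕ))))
    (hx0 : (fun i : Fin n => x (n - 1 - (i : ℕ))) ≠ 0) :
    ∀ i : ℕ, 1 ≤ i → i ≤ n - 1 →
      x i = (-1 / a (-1)) ^ i * htCharPolyEval a i lam * x 0 :=
  stmt2_general a ha n lam x hx
end

section
/- Define polynomials \(k_r(\lambda)\) by \(k_0(\lambda) = 1\) and the recurrence \(k_r(\lambda) = (\binom{k-2}{k-3} - \lambda) k_{r-1}(\lambda) - \sum_{i=2}^{r} (-1)^i \binom{k+i-3}{k-3} k_{r-i}(\lambda)\), where \(k \geq 3\) is a fixed integer. Then \(k_r(\lambda) = \sum_{\ell=0}^{r} (-1)^\ell \binom{(k-2)(\ell+1)}{r-\ell} \lambda^\ell\). -/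
/-!
Write `b = k - 3`. The closed form `P r = ∑ₗ (-1)^ℓ C((b+1)(ℓ+1), r-ℓ) λ^ℓ` satisfies
the recurrence because, as `C(b+i, i) = (-1)^i C(-(b+1), i)`, convolving `P` with `(-1)^i C(b+i, i)`
is Chu–Vandermonde for `C(m - (b+1), ·)`: it lowers `(b+1)(ℓ+1)` to `(b+1)ℓ`, which kills the
`ℓ = 0` term and leaves `-λ P (r-1)`. A full-history recurrence determines its solution.
-/

open Finset

theorem sum_neg_one_pow_mul_choose_mul_choose {b m : ℕ} (h : b + 1 ≤ m) (n : ℕ) :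
    ∑ i ∈ range (n + 1), (-1 : ℤ) ^ i * (b + i).choose i * m.choose (n - i) =
      (m - (b + 1)).choose n := by
  have choose_neg (i : ℕ) :
      Ring.choose (-((b + 1 : ℕ) : ℤ)) i = (-1) ^ i * (b + i).choose i := by
    rw [Ring.choose_neg, Units.smul_def, Int.coe_negOnePow_natCast, smul_eq_mul,
      show ((b + 1 : ℕ) : ℤ) + i - 1 = ((b + i : ℕ) : ℤ) by push_cast; ring,
      Ring.choose_natCast]
  have vandermonde := Ring.add_choose_eq n (Commute.all (-((b + 1 : ℕ) : ℤ)) m)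
  rw [Nat.sum_antidiagonal_eq_sum_range_succ
    (fun i j ↦ Ring.choose (-((b + 1 : ℕ) : ℤ)) i * Ring.choose (m : ℤ) j)] at vandermonde
  simp only [choose_neg, Ring.choose_natCast] at vandermonde
  rw [← vandermonde, neg_add_eq_sub, ← Nat.cast_sub h, Ring.choose_natCast]

theorem eq_of_recurrence {R : Type*} [Ring R] {f g : ℕ → R} {c : R} {w : ℕ → R}
    (h0 : f 0 = g 0)
    (hf : ∀ s, f (s + 1) = c * f s - ∑ i ∈ Icc 2 (s + 1), w i * f (s + 1 - i))
    (hg : ∀ s, g (s + 1) = c * g s - ∑ i ∈ Icc 2 (s + 1), w i * g (s + 1 - i)) :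
    f = g := by
  funext r
  induction r using Nat.strong_induction_on with
  | _ r ih =>
    rcases r with _ | s
    · exact h0
    rw [hf, hg, ih s (by omega)]
    congr 1
    refine sum_congr rfl fun i hi ↦ ?_
    rw [ih (s + 1 - i) (by simp only [mem_Icc] at hi; omega)]

section

variable {R : Type*} [CommRing R]

/-- The closed form of `k_r(λ)` for `k = b + 3`. -/
def kAngulationCharPoly (b : ℕ) (lam : R) (r : ℕ) : R :=
  ∑ l ∈ range (r + 1), (-1) ^ l * (((b + 1) * (l + 1)).choose (r - l) : R) * lam ^ l

theorem sum_neg_one_pow_mul_choose_mul_kAngulationCharPoly (b : ℕ) (lam : R) (s : ℕ) :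
    ∑ i ∈ range (s + 2),
        (-1) ^ i * ((b + i).choose i : R) * kAngulationCharPoly b lam (s + 1 - i) =
      -lam * kAngulationCharPoly b lam s := by
  have inner (l : ℕ) : ∑ i ∈ range (s + 1 - l + 1),
      (-1) ^ i * ((b + i).choose i : R) * ((b + 1) * (l + 1)).choose (s + 1 - l - i) =
        ((b + 1) * l).choose (s + 1 - l) := by
    have h := congrArg (Int.cast : ℤ → R) <| sum_neg_one_pow_mul_choose_mul_choose
      (by nlinarith : b + 1 ≤ (b + 1) * (l + 1)) (s + 1 - l)
    push_cast at h
    rwa [mul_add_one, Nat.add_sub_cancel] at h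
  calc ∑ i ∈ range (s + 2),
        (-1) ^ i * ((b + i).choose i : R) * kAngulationCharPoly b lam (s + 1 - i)
      = ∑ l ∈ range (s + 2), (-1) ^ l * lam ^ l * ∑ i ∈ range (s + 1 - l + 1),
          (-1) ^ i * ((b + i).choose i : R) * ((b + 1) * (l + 1)).choose (s + 1 - l - i) := by
        simp only [kAngulationCharPoly, mul_sum]
        refine sum_comm' (fun i l ↦ ?_) |>.trans
          (sum_congr rfl fun l _ ↦ sum_congr rfl fun i _ ↦ ?_)
        · simp only [mem_range]; omega
        · rw [Nat.sub_right_comm]; ring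
    _ = ∑ l ∈ range (s + 2), (-1) ^ l * lam ^ l * ((b + 1) * l).choose (s + 1 - l) := by
        simp only [inner]
    _ = -lam * kAngulationCharPoly b lam s := by
        rw [sum_range_succ', kAngulationCharPoly, mul_sum, mul_zero, Nat.sub_zero,
          Nat.choose_zero_succ, Nat.cast_zero, mul_zero, add_zero]
        refine sum_congr rfl fun l _ ↦ ?_
        rw [Nat.add_sub_add_right]
        ring

theorem kAngulationCharPoly_succ (b : ℕ) (lam : R) (s : ℕ) :
    kAngulationCharPoly b lam (s + 1) = ((b + 1 : R) - lam) * kAngulationCharPoly b lam s -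
      ∑ i ∈ Icc 2 (s + 1),
        (-1) ^ i * ((b + i).choose i : R) * kAngulationCharPoly b lam (s + 1 - i) := by
  have h := sum_neg_one_pow_mul_choose_mul_kAngulationCharPoly b lam s
  rw [← sum_range_add_sum_Ico _ (by omega : 2 ≤ s + 1 + 1), Ico_add_one_right_eq_Icc] at h
  simp only [sum_range_succ, sum_range_zero, Nat.choose_zero_right, Nat.choose_one_right,
    Nat.sub_zero, Nat.add_sub_cancel, Nat.cast_add_one] at h
  linear_combination h

end

/-- Let `k ≥ 3` and let `f r = k_r(λ)` satisfy `k_0(λ) = 1` and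
`k_r(λ) = (C(k-2,k-3) - λ) k_{r-1}(λ) - ∑_{i=2}^{r} (-1)^i C(k+i-3,k-3) k_{r-i}(λ)`.
Then `k_r(λ) = ∑_{ℓ=0}^{r} (-1)^ℓ C((k-2)(ℓ+1), r-ℓ) λ^ℓ`. -/
theorem stmt3 (k : ℕ) (hk : 3 ≤ k) (lam : ℚ) (f : ℕ → ℚ) (h0 : f 0 = 1)
    (hrec : ∀ r, 1 ≤ r →
      f r = ((Nat.choose (k - 2) (k - 3) : ℚ) - lam) * f (r - 1) -
        ∑ i ∈ Finset.Icc 2 r,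
          (-1 : ℚ) ^ i * (Nat.choose (k + i - 3) (k - 3) : ℚ) * f (r - i)) :
    ∀ r, f r = ∑ l ∈ Finset.range (r + 1),
      (-1 : ℚ) ^ l * (Nat.choose ((k - 2) * (l + 1)) (r - l) : ℚ) * lam ^ l := by
  obtain ⟨b, rfl⟩ : ∃ b, k = b + 3 := ⟨k - 3, by omega⟩
  have hf (s : ℕ) : f (s + 1) = ((b + 1 : ℚ) - lam) * f s -
      ∑ i ∈ Icc 2 (s + 1), (-1) ^ i * ((b + i).choose i : ℚ) * f (s + 1 - i) := by
    rw [hrec (s + 1) (by omega), Nat.add_sub_cancel, show b + 3 - 2 = b + 1 by omega,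
      Nat.add_sub_cancel, Nat.choose_succ_self_right, Nat.cast_add_one]
    congr 2 with i
    rw [show b + 3 + i - 3 = b + i by omega, Nat.choose_symm_add]
  have hf0 : f 0 = kAngulationCharPoly b lam 0 := by simp [h0, kAngulationCharPoly]
  intro r
  rw [eq_of_recurrence hf0 hf (kAngulationCharPoly_succ b lam), kAngulationCharPoly,
    show b + 3 - 2 = b + 1 by omega]
end

section
/- Define polynomials \(g_n(\lambda)\) by \(g_0(\lambda) = 1\) and the recurrence \(g_n(\lambda) = (2 - \lambda) g_{n-1}(\lambda) + \sum_{i=2}^{n} (-1)^{i+1} 2^{2i-1} g_{n-i}(\lambda)\). Then \(g_n(\lambda) = \sum_{t=0}^{n} \sum_{k=t}^{n} (-1)^k \binom{k}{t} \binom{t+1}{n-k} 2^{2n-t-k} \lambda^t\). -/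
/-!
Subtracting four times the recurrence for `g_{n+1}` from the one for `g_{n+2}` collapses the
geometric kernel `(-1)^{i+1} 2^{2i-1}` and leaves `g_{n+2} = -(2+λ) g_{n+1} - 4λ g_n`, so
`∑ gₙ xⁿ = (1+4x) / (1 + (2+λ)x + 4λx²) = ∑ₖ xᵏ (1+4x) (-(2 + λ(1+4x)))ᵏ`.
Expanding `(-(2 + λ(1+4x)))ᵏ` and then `(1+4x)^{t+1}` by the binomial theorem gives the closed form;
the recurrence for the coefficients of the right-hand side follows from the factor `-(2+λ+4λx)`
relating consecutive summands.
-/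

open Finset Polynomial

section Recurrence
variable {R : Type*} [CommRing R]

lemma sum_Icc_two_add_two {M : Type*} [AddCommMonoid M] (f : ℕ → M) (m : ℕ) :
    ∑ i ∈ Icc 2 (m + 2), f i = f 2 + ∑ i ∈ Icc 2 (m + 1), f (i + 1) := by
  rw [Icc_eq_cons_Ioc (by omega), sum_cons, ← Icc_add_one_left_eq_Ioc,
    show Icc (2 + 1) (m + 2) = (Icc 2 (m + 1)).map (addRightEmbedding 1) from
      (map_add_right_Icc 2 (m + 1) 1).symm, sum_map]
  rfl

theorem three_term_rec_of_full_history_rec (lam : R) (g : ℕ → R)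
    (hrec : ∀ n, 1 ≤ n →
      g n = (2 - lam) * g (n - 1) +
        ∑ i ∈ Icc 2 n, (-1 : R) ^ (i + 1) * 2 ^ (2 * i - 1) * g (n - i)) (m : ℕ) :
    g (m + 2) = -(2 + lam) * g (m + 1) - 4 * lam * g m := by
  have hkernel : ∀ i ∈ Icc 2 (m + 1),
      (-1 : R) ^ (i + 1 + 1) * 2 ^ (2 * (i + 1) - 1) * g (m + 2 - (i + 1))
        = -4 * ((-1 : R) ^ (i + 1) * 2 ^ (2 * i - 1) * g (m + 1 - i)) := by
    intro i hi
    obtain ⟨j, rfl⟩ : ∃ j, i = j + 1 := ⟨i - 1, by grind⟩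
    rw [show 2 * (j + 1 + 1) - 1 = 2 * j + 1 + 2 by omega, show 2 * (j + 1) - 1 = 2 * j + 1 by omega,
      show m + 2 - (j + 1 + 1) = m + 1 - (j + 1) by omega]
    ring
  have h2 := hrec (m + 2) (by omega)
  have h1 := hrec (m + 1) (by omega)
  rw [sum_Icc_two_add_two, sum_congr rfl hkernel, ← mul_sum] at h2
  simp only [Nat.add_sub_cancel, show m + 2 - 1 = m + 1 by omega] at h1 h2
  linear_combination h2 + 4 * h1

theorem eq_of_three_term_rec {u v : ℕ → R} {a b : R}
    (hu : ∀ n, u (n + 2) = a * u (n + 1) - b * u n)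
    (hv : ∀ n, v (n + 2) = a * v (n + 1) - b * v n)
    (h0 : u 0 = v 0) (h1 : u 1 = v 1) : u = v := by
  funext n
  induction n using Nat.twoStepInduction with
  | zero => exact h0
  | one => exact h1
  | more n ihn ihn1 => rw [hu, hv, ihn, ihn1]

end Recurrence

section ClosedForm
variable {R : Type*} [CommRing R]

noncomputable def geomTerm (lam : R) (k : ℕ) : R[X] :=
  (1 + C 4 * X) * (-(C 2 + C lam * (1 + C 4 * X))) ^ k

lemma coeff_one_add_C_mul_X_pow (r : R) (n j : ℕ) :
    ((1 + C r * X) ^ n).coeff j = r ^ j * (n.choose j : R) := by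
  rw [add_comm, add_pow, finsetSum_coeff, sum_eq_single j]
  all_goals simp only [one_pow, mul_one, mul_pow, ← C_pow, ← C_eq_natCast, coeff_mul_C,
    coeff_C_mul_X_pow]
  · simp
  · intro i _ hij
    simp [Ne.symm hij]
  · intro hj
    simp [Nat.choose_eq_zero_of_lt (by simpa using hj : n < j)]

lemma coeff_geomTerm (lam : R) (k j : ℕ) :
    (geomTerm lam k).coeff j = ∑ t ∈ range (k + 1),
      (-1) ^ k * (k.choose t : R) * ((t + 1).choose j : R) * 2 ^ (2 * j + k - t) * lam ^ t := by
  have hexpand : geomTerm lam k = ∑ t ∈ range (k + 1),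
      C ((-1) ^ k * lam ^ t * 2 ^ (k - t) * (k.choose t : R)) * (1 + C 4 * X) ^ (t + 1) := by
    rw [geomTerm, neg_eq_neg_one_mul, mul_pow, add_comm (C 2), add_pow, mul_sum, mul_sum]
    refine sum_congr rfl fun t _ => ?_
    simp only [map_mul, map_pow, map_neg, map_one, map_natCast, mul_pow]
    ring
  rw [hexpand, finsetSum_coeff]
  refine sum_congr rfl fun t ht => ?_
  rw [coeff_C_mul, coeff_one_add_C_mul_X_pow,
    show 2 * j + k - t = 2 * j + (k - t) by have := mem_range.1 ht; omega, pow_add, pow_mul]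
  ring

lemma geomTerm_succ (lam : R) (k : ℕ) :
    geomTerm lam (k + 1) =
      C (-(2 + lam)) * geomTerm lam k + C (-(4 * lam)) * (X * geomTerm lam k) := by
  simp only [geomTerm, pow_succ, map_neg, map_add, map_mul]
  ring

noncomputable def closedForm (lam : R) (n : ℕ) : R :=
  ∑ k ∈ range (n + 1), (geomTerm lam k).coeff (n - k)

lemma closedForm_add_two (lam : R) (n : ℕ) :
    closedForm lam (n + 2) = -(2 + lam) * closedForm lam (n + 1) - 4 * lam * closedForm lam n := by
  have hhead : (geomTerm lam 0).coeff (n + 2) = 0 := by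
    simp [geomTerm, coeff_one]
  have hshift : ∑ k ∈ range (n + 2), (X * geomTerm lam k).coeff (n + 1 - k) = closedForm lam n := by
    rw [sum_range_succ, Nat.sub_self, coeff_X_mul_zero, add_zero, closedForm]
    refine sum_congr rfl fun k hk => ?_
    rw [show n + 1 - k = n - k + 1 by have := mem_range.1 hk; omega, coeff_X_mul]
  conv_lhs => rw [closedForm, sum_range_succ', Nat.sub_zero, hhead, add_zero]
  simp only [geomTerm_succ, coeff_add, coeff_C_mul, show ∀ k, n + 2 - (k + 1) = n + 1 - k by omega]
  rw [sum_add_distrib, ← mul_sum, ← mul_sum, hshift]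
  change _ * closedForm lam (n + 1) + _ = _
  ring

lemma closedForm_zero (lam : R) : closedForm lam 0 = 1 := by
  simp [closedForm, geomTerm]

lemma closedForm_one (lam : R) : closedForm lam 1 = 2 - lam := by
  norm_num [closedForm, coeff_geomTerm, sum_range_succ]
  ring

lemma sum_binomial_eq_closedForm (lam : R) (n : ℕ) :
    ∑ t ∈ range (n + 1), ∑ k ∈ Icc t n,
      (-1) ^ k * (k.choose t : R) * ((t + 1).choose (n - k) : R) * 2 ^ (2 * n - t - k) * lam ^ t
      = closedForm lam n := by
  simp only [closedForm, coeff_geomTerm]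
  rw [sum_comm' (t' := range (n + 1)) (s' := fun k => range (k + 1))
    (fun t k => by simp only [mem_range, mem_Icc]; omega)]
  refine sum_congr rfl fun k hk => sum_congr rfl fun t ht => ?_
  rw [show 2 * (n - k) + k - t = 2 * n - t - k by
    have := mem_range.1 hk; have := mem_range.1 ht; omega]

end ClosedForm

/-- Let `g n = g_n(λ)` satisfy `g_0(λ) = 1` and
`g_n(λ) = (2 - λ) g_{n-1}(λ) + ∑_{i=2}^{n} (-1)^{i+1} 2^{2i-1} g_{n-i}(λ)`.
Then `g_n(λ) = ∑_{t=0}^{n} ∑_{k=t}^{n} (-1)^k C(k,t) C(t+1,n-k) 2^{2n-t-k} λ^t`. -/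
theorem stmt4 (lam : ℚ) (g : ℕ → ℚ) (h0 : g 0 = 1)
    (hrec : ∀ n, 1 ≤ n →
      g n = (2 - lam) * g (n - 1) +
        ∑ i ∈ Finset.Icc 2 n, (-1 : ℚ) ^ (i + 1) * 2 ^ (2 * i - 1) * g (n - i)) :
    ∀ n, g n = ∑ t ∈ Finset.range (n + 1), ∑ k ∈ Finset.Icc t n,
      (-1 : ℚ) ^ k * (Nat.choose k t : ℚ) * (Nat.choose (t + 1) (n - k) : ℚ) *
        2 ^ (2 * n - t - k) * lam ^ t := by
  have hg1 : g 1 = 2 - lam := by simpa [h0] using hrec 1 le_rfl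
  have hg : g = closedForm lam :=
    eq_of_three_term_rec (three_term_rec_of_full_history_rec lam g hrec) (closedForm_add_two lam)
      (by rw [h0, closedForm_zero]) (by rw [hg1, closedForm_one])
  intro n
  rw [sum_binomial_eq_closedForm, hg]
end
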